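/- arXiv:1411.7277 — 3 statements merged into one kernel-verified Lean document; each statement's English description precedes it below -/
import Mathlib

section
/- In a W-triangulation G satisfying the chord condition with respect to corners A, B, C, if C is not incident to any chord and deg(C) ≥ 3, then among the neighbours u_1, ..., u_q of C (in clockwise order starting at b_{s-1} and ending at c_2), the vertices u_2, ..., u_{q-1} are interior vertices of G. -/
open scoped Classical

/-! ## Orthogonal curves and 1-string B₂-VPG representations -/

/-- A point in the plane. -/
abbrev Pt := ℝ × ℝ

/-- Two points span an axis-parallel segment. -/
def axisAligned (p q : Pt) : Prop := p.1 = q.1 ∨ p.2 = q.2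

/-- An orthogonal curve, recorded by its corner points (endpoints and bends):
consecutive corner points are axis-aligned. -/
structure OrthoCurve where
  pts : List Pt
  len2 : 2 ≤ pts.length
  ortho : pts.Chain' axisAligned

namespace OrthoCurve

/-- Number of bends of an orthogonal curve. -/
def bends (c : OrthoCurve) : ℕ := c.pts.length - 2

/-- The set of points of the curve: the union of the segments between
consecutive corner points. -/
def toSet (c : OrthoCurve) : Set Pt :=
  ⋃ i : Fin (c.pts.length - 1),
    segment ℝ (c.pts.get ⟨i.1, by have := i.2; omega⟩)
              (c.pts.get ⟨i.1 + 1, by have := i.2; omega⟩)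

/-- The segment between the `i`-th pair of consecutive corners is vertical. -/
def IsVertSeg (p q : Pt) : Prop := p.1 = q.1 ∧ p.2 ≠ q.2

/-- The curve has at most one vertical segment (so it is shaped like C, Z,
or a horizontal mirror image thereof, possibly degenerate). -/
def AtMostOneVertical (c : OrthoCurve) : Prop :=
  ∀ i j : Fin (c.pts.length - 1),
    IsVertSeg (c.pts.get ⟨i.1, by have := i.2; omega⟩)
              (c.pts.get ⟨i.1 + 1, by have := i.2; omega⟩) →
    IsVertSeg (c.pts.get ⟨j.1, by have := j.2; omega⟩)
              (c.pts.get ⟨j.1 + 1, by have := j.2; omega⟩) →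
    i = j

end OrthoCurve

/-- A (partial) 1-string B₂-VPG representation of the edge set `E` of a graph `G`:
every vertex gets an orthogonal curve with at most two bends, two curves share at
most one point, and they meet iff the corresponding pair is an edge in `E`. -/
structure VPGRep {V : Type*} (G : SimpleGraph V) (E : Set (Sym2 V)) where
  curve : V → OrthoCurve
  bends_le : ∀ v, (curve v).bends ≤ 2
  one_string : ∀ u v, u ≠ v → ((curve u).toSet ∩ (curve v).toSet).Subsingleton
  cross_iff : ∀ u v, u ≠ v →
    (((curve u).toSet ∩ (curve v).toSet).Nonempty ↔ s(u, v) ∈ E)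

/-- `G` has a (full) 1-string B₂-VPG representation. -/
def HasB2VPG {V : Type*} (G : SimpleGraph V) : Prop := Nonempty (VPGRep G G.edgeSet)

/-! ## Combinatorial plane triangulated disks -/

/-- The cyclically next index in a list. -/
def nextIdx {α : Type*} (l : List α) (i : Fin l.length) : Fin l.length :=
  ⟨(i.1 + 1) % l.length, Nat.mod_lt _ (Nat.lt_of_le_of_lt (Nat.zero_le _) i.2)⟩

/-- A triangulated disk: a plane graph whose outer face is a simple cycle
(listed in counter-clockwise order) and all of whose interior faces are
triangles; every interior edge lies on exactly two interior faces and every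
outer edge on exactly one. -/
structure TriangulatedDisk (V : Type*) [DecidableEq V] where
  G : SimpleGraph V
  outer : List V
  outer_nodup : outer.Nodup
  outer_len : 3 ≤ outer.length
  outer_adj : ∀ i : Fin outer.length, G.Adj (outer.get i) (outer.get (nextIdx outer i))
  faces : Finset (Finset V)
  face_card : ∀ f ∈ faces, f.card = 3
  face_clique : ∀ f ∈ faces, G.IsClique (↑f : Set V)
  edge_face_count : ∀ u v, G.Adj u v →
    (faces.filter (fun f => u ∈ f ∧ v ∈ f)).card =
      (if ∃ i : Fin outer.length,
          (outer.get i = u ∧ outer.get (nextIdx outer i) = v) ∨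
          (outer.get i = v ∧ outer.get (nextIdx outer i) = u) then 1 else 2)

namespace TriangulatedDisk

variable {V : Type*} [DecidableEq V]

/-- `u` and `v` are consecutive on the outer cycle. -/
def OuterAdj (D : TriangulatedDisk V) (u v : V) : Prop :=
  ∃ i : Fin D.outer.length,
    (D.outer.get i = u ∧ D.outer.get (nextIdx D.outer i) = v) ∨
    (D.outer.get i = v ∧ D.outer.get (nextIdx D.outer i) = u)

/-- A chord: an interior edge with both endpoints on the outer face. -/
def IsChord (D : TriangulatedDisk V) (u v : V) : Prop :=
  D.G.Adj u v ∧ u ∈ D.outer ∧ v ∈ D.outer ∧ ¬ D.OuterAdj u v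

/-- The interior edges of a triangulated disk. -/
def interiorEdges (D : TriangulatedDisk V) : Set (Sym2 V) :=
  {e | e ∈ D.G.edgeSet ∧ ∀ u v, e = s(u, v) → ¬ D.OuterAdj u v}

/-- `v` lies strictly inside the triangle `t`: it is not on `t` nor on the outer
face, and every walk from `v` to the outer face must pass through `t`. -/
def InsideTri (D : TriangulatedDisk V) (t : Finset V) (v : V) : Prop :=
  v ∉ t ∧ v ∉ D.outer ∧ ∀ w ∈ D.outer, ∀ p : D.G.Walk v w, ∃ x ∈ t, x ∈ p.support

/-- A separating triangle: a triangle of `G` having a vertex strictly inside it. -/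
def SepTri (D : TriangulatedDisk V) (t : Finset V) : Prop :=
  t.card = 3 ∧ D.G.IsClique (↑t : Set V) ∧ ∃ v, D.InsideTri t v

end TriangulatedDisk

/-- A W-triangulation: a triangulated disk without separating triangles. -/
structure WTriangulation (V : Type*) [DecidableEq V] extends TriangulatedDisk V where
  no_sep : ∀ t : Finset V, ¬ toTriangulatedDisk.SepTri t

/-- The underlying triangulated disk of a W-triangulation. -/
def WTriangulation.disk {V : Type*} [DecidableEq V] (W : WTriangulation V) :
    TriangulatedDisk V := W.toTriangulatedDisk

/-- The counter-clockwise path from `a` to `b` (both inclusive) along a cyclic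
list `l`. -/
def cyclePath {V : Type*} [DecidableEq V] (l : List V) (a b : V) : List V :=
  let r := l.rotate (l.idxOf a)
  r.take (r.idxOf b + 1)

/-- A W-triangulation together with three distinct corners `A`, `B`, `C`
appearing in counter-clockwise order on the outer face. -/
structure CornerSetup (V : Type*) [DecidableEq V] extends WTriangulation V where
  A : V
  B : V
  C : V
  hA : A ∈ toTriangulatedDisk.outer
  hB : B ∈ toTriangulatedDisk.outer
  hC : C ∈ toTriangulatedDisk.outer
  hAB : A ≠ B
  hBC : B ≠ C
  hCA : C ≠ A
  ccw : (toTriangulatedDisk.outer.rotate (toTriangulatedDisk.outer.idxOf A)).idxOf B <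
        (toTriangulatedDisk.outer.rotate (toTriangulatedDisk.outer.idxOf A)).idxOf C

namespace CornerSetup

variable {V : Type*} [DecidableEq V]

/-- The underlying triangulated disk. -/
def disk (S : CornerSetup V) : TriangulatedDisk V := S.toTriangulatedDisk

/-- The CCW outer path from `A` to `B`. -/
def PAB (S : CornerSetup V) : List V := cyclePath S.disk.outer S.A S.B
/-- The CCW outer path from `B` to `C`. -/
def PBC (S : CornerSetup V) : List V := cyclePath S.disk.outer S.B S.C
/-- The CCW outer path from `C` to `A`. -/
def PCA (S : CornerSetup V) : List V := cyclePath S.disk.outer S.C S.A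

/-- The chord condition: no chord has both endpoints on a single one of the
three outer paths `P_AB`, `P_BC`, `P_CA`. -/
def ChordCond (S : CornerSetup V) : Prop :=
  ∀ u v, S.disk.IsChord u v →
    ¬(u ∈ S.PAB ∧ v ∈ S.PAB) ∧ ¬(u ∈ S.PBC ∧ v ∈ S.PBC) ∧ ¬(u ∈ S.PCA ∧ v ∈ S.PCA)

end CornerSetup

/-! ## General plane graphs (as combinatorial maps by facial cycles) -/

/-- An embedded planar graph all of whose facial boundaries are simple cycles,
recorded by the finite set of its facial cycles (including the outer one);
every edge lies on exactly two faces. -/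
structure PlaneGraph (V : Type*) [DecidableEq V] where
  G : SimpleGraph V
  faces : Finset (List V)
  outer : List V
  outer_mem : outer ∈ faces
  face_nodup : ∀ f ∈ faces, f.Nodup
  face_len : ∀ f ∈ faces, 3 ≤ f.length
  face_cycle : ∀ f ∈ faces, ∀ i : Fin f.length, G.Adj (f.get i) (f.get (nextIdx f i))
  edge_count : ∀ u v, G.Adj u v →
    (faces.filter (fun f => ∃ i : Fin f.length,
        (f.get i = u ∧ f.get (nextIdx f i) = v) ∨
        (f.get i = v ∧ f.get (nextIdx f i) = u))).card = 2

/-- No separating triangle: every triangle of the graph bounds a face. -/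
def PlaneGraph.NoSepTri {V : Type*} [DecidableEq V] (P : PlaneGraph V) : Prop :=
  ∀ t : Finset V, t.card = 3 → P.G.IsClique (↑t : Set V) →
    ∃ f ∈ P.faces, f.toFinset = t

/-- `k`-connectivity: more than `k` vertices, and removing fewer than `k`
vertices leaves the graph connected. -/
def KConnected {V : Type*} [Fintype V] (k : ℕ) (G : SimpleGraph V) : Prop :=
  k + 1 ≤ Fintype.card V ∧
    ∀ s : Finset V, s.card < k → (G.induce ((↑s : Set V)ᶜ)).Connected

theorem nextIdx_injective {α : Type*} (l : List α) : Function.Injective (nextIdx l) := by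
  intro i i' h
  have hmod : i.1 + 1 ≡ i'.1 + 1 [MOD l.length] := congrArg Fin.val h
  have hmod' : i.1 % l.length = i'.1 % l.length := Nat.ModEq.add_right_cancel' 1 hmod
  rw [Nat.mod_eq_of_lt i.2, Nat.mod_eq_of_lt i'.2] at hmod'
  exact Fin.ext hmod'

noncomputable def nextEquiv {α : Type*} (l : List α) : Equiv.Perm (Fin l.length) :=
  Equiv.ofBijective (nextIdx l) ((nextIdx_injective l).bijective_of_finite)

namespace TriangulatedDisk

variable {V : Type*} [DecidableEq V]

theorem OuterAdj.eq_next_or_eq_prev {D : TriangulatedDisk V} {i : Fin D.outer.length} {x : V}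
    (h : D.OuterAdj (D.outer.get i) x) :
    x = D.outer.get (nextEquiv D.outer i) ∨ x = D.outer.get ((nextEquiv D.outer).symm i) := by
  obtain ⟨k, ⟨hk, hx⟩ | ⟨hx, hk⟩⟩ := h
  · left
    rw [D.outer_nodup.get_inj_iff.mp hk] at hx
    exact hx.symm
  · right
    have hki : nextEquiv D.outer k = i := D.outer_nodup.get_inj_iff.mp hk
    rw [← hki, Equiv.symm_apply_apply, hx]

theorem outerAdj_of_adj_of_mem_outer {D : TriangulatedDisk V} {c w : V}
    (hnochord : ¬ D.IsChord c w) (hadj : D.G.Adj c w) (hc : c ∈ D.outer) (hw : w ∈ D.outer) :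
    D.OuterAdj c w :=
  not_not.mp fun h => hnochord ⟨hadj, hc, hw, h⟩

end TriangulatedDisk

theorem stmt3_general {V : Type} [DecidableEq V] (S : CornerSetup V)
    (hnochord : ∀ w, ¬ S.disk.IsChord S.C w)
    (u v : V) (hu : S.disk.OuterAdj S.C u) (hv : S.disk.OuterAdj S.C v) (huv : u ≠ v) :
    ∀ w, S.disk.G.Adj S.C w → w ≠ u → w ≠ v → w ∉ S.disk.outer := by
  intro w hadj hwu hwv hwout
  have hw := TriangulatedDisk.outerAdj_of_adj_of_mem_outer (hnochord w) hadj S.hC hwout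
  obtain ⟨j, hj⟩ := List.mem_iff_get.mp S.hC
  rw [← hj] at hu hv hw
  -- `C` has only two outer neighbours, but `u`, `v`, `w` would be three distinct ones.
  rcases hu.eq_next_or_eq_prev with rfl | rfl <;> rcases hv.eq_next_or_eq_prev with rfl | rfl <;>
    rcases hw.eq_next_or_eq_prev with rfl | rfl <;> contradiction

/-- In a W-triangulation satisfying the chord condition, if the
corner `C` is not incident to any chord and has degree at least 3, then all of
its neighbours other than its two outer-face neighbours are interior vertices. -/
theorem stmt3 {V : Type} [DecidableEq V] (S : CornerSetup V) (hcc : S.ChordCond)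
    (hnochord : ∀ w, ¬ S.disk.IsChord S.C w)
    (hdeg : 3 ≤ (S.disk.G.neighborSet S.C).ncard)
    (u v : V) (hu : S.disk.OuterAdj S.C u) (hv : S.disk.OuterAdj S.C v) (huv : u ≠ v) :
    ∀ w, S.disk.G.Adj S.C w → w ≠ u → w ≠ v → w ∉ S.disk.outer :=
  stmt3_general S hnochord u v hu hv huv
end

section
/- If the class of 4-connected planar triangulations has 1-string B_2-VPG representations, then every 4-connected planar graph has a 1-string B_2-VPG representation, via stellating non-triangular faces (which preserves 4-connectivity away from separating triangles) and restricting the representation to the original vertex set. -/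
open scoped Classical

/-!
Stellate every non-triangular face: add one new vertex adjacent to all vertices of the face,
splitting the face into triangles around it. The result is a plane triangulation that contains
the original graph as an induced subgraph. It is still 4-connected: a new vertex has at least
four neighbours on its face, so deleting fewer than four vertices leaves it attached to the
original graph, which stays connected. Deleting the curves of the new vertices from a
representation of the triangulation represents the original graph.
-/

theorem dvd_of_add_mod_eq_self {n i k : ℕ} (hi : i < n) (h : (i + k) % n = i) : n ∣ k := by
  rw [← Nat.modEq_zero_iff_dvd]
  refine Nat.ModEq.add_left_cancel' i ?_
  rw [add_zero]
  exact h.trans (Nat.mod_eq_of_lt hi).symm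

section CyclicList

variable {α : Type*}

theorem nextIdx_eq_finRotate (l : List α) (i : Fin l.length) :
    nextIdx l i = finRotate l.length i := by
  have : NeZero l.length := i.neZero
  ext
  rw [finRotate_apply, Fin.val_add, Fin.val_one', Nat.add_mod_mod]
  rfl

theorem nextIdx_ne_self (l : List α) (hl : 2 ≤ l.length) (i : Fin l.length) :
    nextIdx l i ≠ i := by
  intro h
  have := Nat.le_of_dvd one_pos (dvd_of_add_mod_eq_self i.2 (congrArg Fin.val h))
  omega

theorem nextIdx_nextIdx_ne_self (l : List α) (hl : 3 ≤ l.length) (i : Fin l.length) :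
    nextIdx l (nextIdx l i) ≠ i := by
  intro h
  have h2 : (i.1 + 2) % l.length = i.1 := by
    have := congrArg Fin.val h
    simpa only [nextIdx, Nat.mod_add_mod, add_assoc] using this
  have := Nat.le_of_dvd two_pos (dvd_of_add_mod_eq_self i.2 h2)
  omega

def cyclicEdge (l : List α) (i : Fin l.length) : Sym2 α :=
  s(l.get i, l.get (nextIdx l i))

def CyclicAdj (l : List α) (u v : α) : Prop :=
  ∃ i : Fin l.length,
    (l.get i = u ∧ l.get (nextIdx l i) = v) ∨ (l.get i = v ∧ l.get (nextIdx l i) = u)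

theorem cyclicAdj_iff_exists_cyclicEdge {l : List α} {u v : α} :
    CyclicAdj l u v ↔ ∃ i, cyclicEdge l i = s(u, v) :=
  exists_congr fun _ => Sym2.eq_iff.symm

theorem cyclicAdj_comm {l : List α} {u v : α} : CyclicAdj l u v ↔ CyclicAdj l v u := by
  simp only [cyclicAdj_iff_exists_cyclicEdge, Sym2.eq_swap]

theorem CyclicAdj.left_mem {l : List α} {u v : α} (h : CyclicAdj l u v) : u ∈ l := by
  obtain ⟨i, ⟨hi, -⟩ | ⟨-, hi⟩⟩ := h
  · exact hi ▸ List.get_mem l i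
  · exact hi ▸ List.get_mem l _

theorem cyclicEdge_map {β : Type*} (l : List α) (g : α → β) (i : Fin (l.map g).length) :
    cyclicEdge (l.map g) i = (cyclicEdge l (i.cast (l.length_map g))).map g := by
  simp [cyclicEdge, nextIdx]

theorem cyclicAdj_map_iff {β : Type*} {l : List α} {g : α → β} (hg : Function.Injective g)
    {u v : α} : CyclicAdj (l.map g) (g u) (g v) ↔ CyclicAdj l u v := by
  simp only [cyclicAdj_iff_exists_cyclicEdge, cyclicEdge_map, ← Sym2.map_mk,
    (Sym2.map.injective hg).eq_iff]
  exact (finCongr (l.length_map g)).exists_congr_left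

theorem cyclicAdj_triple {a b c x y : α} :
    CyclicAdj [a, b, c] x y ↔ s(a, b) = s(x, y) ∨ s(b, c) = s(x, y) ∨ s(c, a) = s(x, y) := by
  simp [cyclicAdj_iff_exists_cyclicEdge, Fin.exists_fin_succ, cyclicEdge, nextIdx]

theorem cyclicEdge_injective {l : List α} (hl : l.Nodup) (h3 : 3 ≤ l.length) :
    Function.Injective (cyclicEdge l) := by
  have get_inj := List.nodup_iff_injective_get.mp hl
  intro i j h
  rcases Sym2.eq_iff.mp h with ⟨h1, -⟩ | ⟨h1, h2⟩
  · exact get_inj h1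
  · have hj : j = nextIdx l i := get_inj h2.symm
    have hi : i = nextIdx l j := get_inj h1
    exact absurd (hj ▸ hi).symm (nextIdx_nextIdx_ne_self l h3 i)

theorem card_filter_cyclicEdge_eq {l : List α} (hl : l.Nodup) (h3 : 3 ≤ l.length) (e : Sym2 α) :
    (Finset.univ.filter fun i => cyclicEdge l i = e).card =
      if ∃ i, cyclicEdge l i = e then 1 else 0 := by
  split_ifs with h
  · obtain ⟨i, rfl⟩ := h
    simp [(cyclicEdge_injective hl h3).eq_iff, Finset.filter_eq']
  · simpa using h

theorem card_filter_get_or_get_nextIdx {l : List α} (hl : l.Nodup) (h2 : 2 ≤ l.length) {u : α}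
    (hu : u ∈ l) :
    (Finset.univ.filter fun i => l.get i = u ∨ l.get (nextIdx l i) = u).card = 2 := by
  obtain ⟨j, rfl⟩ := List.mem_iff_get.mp hu
  have get_inj := List.nodup_iff_injective_get.mp hl
  have hne : j ≠ (finRotate l.length).symm j := by
    intro h
    have := nextIdx_ne_self l h2 ((finRotate l.length).symm j)
    rw [nextIdx_eq_finRotate, Equiv.apply_symm_apply] at this
    exact this h
  have : (Finset.univ.filter fun i => l.get i = l.get j ∨ l.get (nextIdx l i) = l.get j) =
      {j, (finRotate l.length).symm j} := by
    ext i
    rw [Finset.mem_filter, get_inj.eq_iff, get_inj.eq_iff, nextIdx_eq_finRotate,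
      ← Equiv.eq_symm_apply]
    simp
  rw [this, Finset.card_pair hne]

end CyclicList

theorem SimpleGraph.Connected.of_hom_of_forall_reachable {V W : Type*} {G : SimpleGraph V}
    {H : SimpleGraph W} (hG : G.Connected) (φ : G →g H)
    (h : ∀ w, ∃ v, H.Reachable w (φ v)) : H.Connected := by
  have ⟨v₀⟩ := hG.nonempty
  refine (SimpleGraph.connected_iff H).mpr ⟨fun x y => ?_, ⟨φ v₀⟩⟩
  obtain ⟨v, hv⟩ := h x
  obtain ⟨w, hw⟩ := h y
  exact hv.trans (((hG.preconnected v w).map φ).trans hw.symm)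

theorem HasB2VPG.of_embedding {V W : Type*} {G : SimpleGraph V} {H : SimpleGraph W}
    (φ : G ↪g H) (hH : HasB2VPG H) : HasB2VPG G := by
  obtain ⟨R⟩ := hH
  refine ⟨⟨R.curve ∘ φ, fun v => R.bends_le (φ v), fun u v huv => ?_,
    fun u v huv => ?_⟩⟩
  · exact R.one_string _ _ (φ.injective.ne huv)
  · rw [Function.comp_apply, Function.comp_apply, R.cross_iff _ _ (φ.injective.ne huv)]
    exact φ.map_adj_iff

namespace PlaneGraph

variable {V : Type*} [DecidableEq V] (P : PlaneGraph V)

def bigFaces : Finset (List V) := P.faces.filter fun f => f.length ≠ 3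

abbrev StellVert : Type _ := V ⊕ P.bigFaces

def StellAdj : P.StellVert → P.StellVert → Prop
  | .inl u, .inl v => P.G.Adj u v
  | .inl u, .inr f => u ∈ f.1
  | .inr f, .inl u => u ∈ f.1
  | .inr _, .inr _ => False

def stellGraph : SimpleGraph P.StellVert where
  Adj := P.StellAdj
  symm := ⟨by rintro (u | f) (v | g) h <;> first | exact h | exact SimpleGraph.Adj.symm h⟩
  loopless := ⟨by rintro (u | f) h; exacts [P.G.loopless.irrefl u h, h]⟩

def inlEmbedding : P.G ↪g P.stellGraph := ⟨Function.Embedding.inl, Iff.rfl⟩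

variable {P}

theorem length_of_mem_bigFaces {f : List V} (hf : f ∈ P.bigFaces) : 4 ≤ f.length := by
  obtain ⟨hf, h3⟩ := Finset.mem_filter.mp hf
  have := P.face_len f hf
  omega

theorem mem_faces_of_mem_bigFaces {f : List V} (hf : f ∈ P.bigFaces) : f ∈ P.faces :=
  (Finset.mem_filter.mp hf).1

variable (P)

def stellTri (f : P.bigFaces) (i : Fin f.1.length) : List P.StellVert :=
  [.inl (f.1.get i), .inl (f.1.get (nextIdx f.1 i)), .inr f]

def stellPiece (f : P.faces) : Finset (List P.StellVert) :=
  if h : f.1.length = 3 then {f.1.map .inl}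
  else Finset.univ.image (P.stellTri ⟨f.1, Finset.mem_filter.mpr ⟨f.2, h⟩⟩)

def stellFaces : Finset (List P.StellVert) := P.faces.attach.biUnion P.stellPiece

-- When the outer face is stellated, any one of its triangles serves as the new outer face.
def stellOuter : List P.StellVert :=
  if h : P.outer.length = 3 then P.outer.map .inl
  else P.stellTri ⟨P.outer, Finset.mem_filter.mpr ⟨P.outer_mem, h⟩⟩
    ⟨0, show 0 < P.outer.length by have := P.face_len _ P.outer_mem; omega⟩

variable {P}

theorem stellTri_injective (f : P.bigFaces) : Function.Injective (P.stellTri f) := by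
  intro i j h
  simp only [stellTri, List.cons.injEq, Sum.inl.injEq] at h
  exact List.nodup_iff_injective_get.mp (P.face_nodup f.1 (mem_faces_of_mem_bigFaces f.2)) h.1

theorem mem_stellPiece {f : P.faces} {x : List P.StellVert} :
    x ∈ P.stellPiece f ↔ (f.1.length = 3 ∧ x = f.1.map .inl) ∨
      ∃ (h : f.1.length ≠ 3) (i : Fin f.1.length),
        x = P.stellTri ⟨f.1, Finset.mem_filter.mpr ⟨f.2, h⟩⟩ i := by
  unfold stellPiece
  split_ifs with h
  · simp [h]
  · simp [h, eq_comm]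

theorem mem_stellFaces {x : List P.StellVert} :
    x ∈ P.stellFaces ↔ ∃ f, x ∈ P.stellPiece f := by
  simp [stellFaces]

theorem stellOuter_mem_stellFaces : P.stellOuter ∈ P.stellFaces := by
  refine mem_stellFaces.mpr ⟨⟨P.outer, P.outer_mem⟩, ?_⟩
  unfold stellOuter stellPiece
  split_ifs
  · exact Finset.mem_singleton_self _
  · exact Finset.mem_image_of_mem _ (Finset.mem_univ _)

theorem length_of_mem_stellFaces {x : List P.StellVert} (hx : x ∈ P.stellFaces) :
    x.length = 3 := by
  obtain ⟨f, hf⟩ := mem_stellFaces.mp hx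
  rcases mem_stellPiece.mp hf with ⟨h3, rfl⟩ | ⟨-, i, rfl⟩
  · simpa using h3
  · rfl

theorem nodup_of_mem_stellFaces {x : List P.StellVert} (hx : x ∈ P.stellFaces) : x.Nodup := by
  obtain ⟨f, hf⟩ := mem_stellFaces.mp hx
  have hnd := P.face_nodup f.1 f.2
  rcases mem_stellPiece.mp hf with ⟨-, rfl⟩ | ⟨-, i, rfl⟩
  · exact hnd.map Sum.inl_injective
  · have hne : f.1.get i ≠ f.1.get (nextIdx f.1 i) := fun h =>
      nextIdx_ne_self f.1 (by have := P.face_len f.1 f.2; omega) i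
        (List.nodup_iff_injective_get.mp hnd h).symm
    simpa [stellTri] using hne

theorem stellGraph_adj_of_mem_stellFaces {x : List P.StellVert} (hx : x ∈ P.stellFaces)
    (i : Fin x.length) : P.stellGraph.Adj (x.get i) (x.get (nextIdx x i)) := by
  obtain ⟨f, hf⟩ := mem_stellFaces.mp hx
  rcases mem_stellPiece.mp hf with ⟨-, rfl⟩ | ⟨-, j, rfl⟩
  · change cyclicEdge _ i ∈ P.stellGraph.edgeSet
    rw [cyclicEdge_map]
    exact P.inlEmbedding.toHom.map_mem_edgeSet (P.face_cycle f.1 f.2 _)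
  · fin_cases i
    · exact P.face_cycle f.1 f.2 j
    · exact List.get_mem _ _
    · simp [stellTri, nextIdx, stellGraph, StellAdj]

theorem cyclicAdj_stellTri_inl_inl {f : P.bigFaces} {i : Fin f.1.length} {u v : V} :
    CyclicAdj (P.stellTri f i) (.inl u) (.inl v) ↔ cyclicEdge f.1 i = s(u, v) := by
  simp [stellTri, cyclicAdj_triple, cyclicEdge]

theorem cyclicAdj_stellTri_inl_inr {f g : P.bigFaces} {i : Fin f.1.length} {u : V} :
    CyclicAdj (P.stellTri f i) (.inl u) (.inr g) ↔
      f = g ∧ (f.1.get i = u ∨ f.1.get (nextIdx f.1 i) = u) := by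
  simp [stellTri, cyclicAdj_triple]
  tauto

theorem stellPiece_pairwiseDisjoint :
    (P.faces.attach : Set P.faces).PairwiseDisjoint P.stellPiece := by
  intro f _ g _ hfg
  refine Finset.disjoint_left.mpr fun x hxf hxg => hfg ?_
  rcases mem_stellPiece.mp hxf with ⟨-, rfl⟩ | ⟨hf, i, rfl⟩ <;>
    rcases mem_stellPiece.mp hxg with ⟨-, he⟩ | ⟨hg, j, he⟩
  · exact Subtype.ext (List.map_injective_iff.mpr Sum.inl_injective he)
  all_goals have last := congrArg List.getLast? he; simp only [stellTri] at last
  · simp at last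
  · simp at last
  · simp only [List.getLast?_cons_cons, List.getLast?_singleton, Option.some.injEq,
      Sum.inr.injEq] at last
    have same_face := congrArg Subtype.val last
    exact Subtype.ext same_face

theorem card_filter_stellFaces (p : List P.StellVert → Prop) [DecidablePred p] :
    (P.stellFaces.filter p).card = ∑ f ∈ P.faces.attach, ((P.stellPiece f).filter p).card := by
  rw [stellFaces, Finset.filter_biUnion, Finset.card_biUnion]
  exact stellPiece_pairwiseDisjoint.mono fun f => Finset.filter_subset _ _

theorem card_filter_stellPiece_inl_inl (u v : V) (f : P.faces) :
    ((P.stellPiece f).filter fun x => CyclicAdj x (.inl u) (.inl v)).card =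
      if CyclicAdj f.1 u v then 1 else 0 := by
  by_cases h3 : f.1.length = 3
  · rw [stellPiece, dif_pos h3, Finset.filter_singleton]
    split_ifs <;> simp_all [cyclicAdj_map_iff Sum.inl_injective]
  · rw [stellPiece, dif_neg h3, Finset.filter_image,
      Finset.card_image_of_injective _ (stellTri_injective _)]
    simp only [cyclicAdj_stellTri_inl_inl]
    simp only [cyclicAdj_iff_exists_cyclicEdge]
    convert card_filter_cyclicEdge_eq (P.face_nodup f.1 f.2) (P.face_len f.1 f.2) s(u, v)

theorem card_filter_stellPiece_inl_inr {u : V} {g : P.bigFaces} (hu : u ∈ g.1) (f : P.faces) :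
    ((P.stellPiece f).filter fun x => CyclicAdj x (.inl u) (.inr g)).card =
      if f.1 = g.1 then 2 else 0 := by
  by_cases h3 : f.1.length = 3
  · have hfg : f.1 ≠ g.1 := fun h => (Finset.mem_filter.mp g.2).2 (h ▸ h3)
    rw [stellPiece, dif_pos h3, if_neg hfg, Finset.card_eq_zero, Finset.filter_singleton,
      ite_eq_right_iff]
    intro h
    simpa using (cyclicAdj_comm.mp h).left_mem
  · rw [stellPiece, dif_neg h3, Finset.filter_image,
      Finset.card_image_of_injective _ (stellTri_injective _)]
    split_ifs with hfg
    · obtain ⟨f, hf⟩ := f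
      subst hfg
      simpa [cyclicAdj_stellTri_inl_inr] using card_filter_get_or_get_nextIdx
        (P.face_nodup _ hf) (by have := length_of_mem_bigFaces g.2; omega) hu
    · simp [cyclicAdj_stellTri_inl_inr, Subtype.ext_iff, hfg]

-- An old edge lies on one stellated face per old face through it; an edge from `u` to the new
-- vertex of `g` lies on the two triangles of `g` at `u`.
theorem card_filter_stellFaces_cyclicAdj {x y : P.StellVert} (hxy : P.stellGraph.Adj x y) :
    (P.stellFaces.filter fun g => CyclicAdj g x y).card = 2 := by
  rw [card_filter_stellFaces]
  match x, y, hxy with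
  | .inl u, .inl v, huv =>
    simp only [card_filter_stellPiece_inl_inl, Finset.sum_attach P.faces fun f =>
      if CyclicAdj f u v then 1 else 0, ← Finset.card_filter]
    convert P.edge_count u v huv
    rfl
  | .inl u, .inr g, hug =>
    simp only [card_filter_stellPiece_inl_inr hug, Finset.sum_attach P.faces fun f =>
      if f = g.1 then 2 else 0, Finset.sum_ite_eq', mem_faces_of_mem_bigFaces g.2, if_true]
  | .inr g, .inl u, hgu =>
    simp only [cyclicAdj_comm (u := Sum.inr g), card_filter_stellPiece_inl_inr hgu,
      Finset.sum_attach P.faces fun f => if f = g.1 then 2 else 0, Finset.sum_ite_eq',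
      mem_faces_of_mem_bigFaces g.2, if_true]

variable (P) in
def stellate : PlaneGraph P.StellVert where
  G := P.stellGraph
  faces := P.stellFaces
  outer := P.stellOuter
  outer_mem := stellOuter_mem_stellFaces
  face_nodup _ := nodup_of_mem_stellFaces
  face_len _ hx := (length_of_mem_stellFaces hx).ge
  face_cycle _ := stellGraph_adj_of_mem_stellFaces
  edge_count _ _ hxy := by convert card_filter_stellFaces_cyclicAdj hxy; rfl

variable (P) in
theorem stellate_face_length : ∀ f ∈ P.stellate.faces, f.length = 3 :=
  fun _ hx => length_of_mem_stellFaces (P := P) hx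

theorem exists_inl_notMem_of_mem_bigFaces {f : List V} (hf : f ∈ P.bigFaces)
    {s : Finset P.StellVert} (hs : s.card < 4) : ∃ u ∈ f, Sum.inl u ∉ s := by
  have hlt : s.toLeft.card < f.toFinset.card := by
    rw [List.toFinset_card_of_nodup (P.face_nodup f (mem_faces_of_mem_bigFaces hf))]
    exact (Finset.card_toLeft_le.trans_lt hs).trans_le (length_of_mem_bigFaces hf)
  obtain ⟨u, hu, hus⟩ := Finset.exists_mem_notMem_of_card_lt_card hlt
  exact ⟨u, List.mem_toFinset.mp hu, fun h => hus (Finset.mem_toLeft.mpr h)⟩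

theorem kConnected_stellate [Fintype V] (hP : KConnected 4 P.G) : KConnected 4 P.stellate.G := by
  obtain ⟨hcard, hconn⟩ := hP
  refine ⟨hcard.trans (Fintype.card_le_of_injective _ Sum.inl_injective), fun s hs => ?_⟩
  let φ : P.G.induce (↑s.toLeft)ᶜ →g P.stellate.G.induce (↑s)ᶜ :=
    ⟨fun v => ⟨.inl v.1, fun h => v.2 (Finset.mem_toLeft.mpr h)⟩, id⟩
  refine (hconn s.toLeft (Finset.card_toLeft_le.trans_lt hs)).of_hom_of_forall_reachable φ ?_
  rintro ⟨u | f, hx⟩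
  · exact ⟨⟨u, fun h => hx (Finset.mem_toLeft.mp h)⟩, .rfl⟩
  · obtain ⟨u, hu, hus⟩ := exists_inl_notMem_of_mem_bigFaces f.2 hs
    exact ⟨⟨u, fun h => hus (Finset.mem_toLeft.mp h)⟩, SimpleGraph.Adj.reachable hu⟩

end PlaneGraph

/-- If every 4-connected planar triangulation has a 1-string
B₂-VPG representation, then every 4-connected planar graph has one. -/
theorem stmt8
    (hyp : ∀ (V : Type) (dV : DecidableEq V) (fV : Fintype V) (P : @PlaneGraph V dV),
      (∀ f ∈ P.faces, f.length = 3) → @KConnected V fV 4 P.G → HasB2VPG P.G) :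
    ∀ (V : Type) (dV : DecidableEq V) (fV : Fintype V) (P : @PlaneGraph V dV),
      @KConnected V fV 4 P.G → HasB2VPG P.G := by
  intro V _ _ P hP
  have hstell : HasB2VPG P.stellate.G :=
    hyp _ _ _ P.stellate P.stellate_face_length (PlaneGraph.kConnected_stellate hP)
  exact hstell.of_embedding P.inlEmbedding
end

section
/- Let G be an n-vertex graph with a 1-string B_2-VPG representation. Then G has such a representation in which all bends and endpoints of curves lie on an integer grid of size O(n) × O(n); in particular, the total number of segments over all curves is at most 3n. -/
open scoped Classical

/-!
Only the relative order of the at most `8n` coordinates of corner points matters. An increasing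
homeomorphism `φ` of `ℝ` sending these values into `{0, 1, …, 8n}`, applied to both
coordinates, is a bijection of the plane mapping each axis-parallel segment onto the segment
between the images of its endpoints; hence it maps every curve onto the curve through the moved
corner points and preserves the intersection pattern.
-/

open Finset

noncomputable def bendAt (p c x : ℝ) : ℝ := p + min (x - p) 0 + c * max (x - p) 0

lemma continuous_bendAt (p c : ℝ) : Continuous (bendAt p c) := by
  unfold bendAt; fun_prop

lemma bendAt_of_le {p c x : ℝ} (hx : x ≤ p) : bendAt p c x = x := by
  simp [bendAt, hx]

lemma bendAt_of_ge {p c x : ℝ} (hx : p ≤ x) : bendAt p c x = p + c * (x - p) := by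
  simp [bendAt, hx]

lemma bendAt_strictMono {p c : ℝ} (hc : 0 < c) : StrictMono (bendAt p c) := by
  intro x y hxy
  rcases lt_or_ge x p with hx | hx
  · have hmin : min (x - p) 0 < min (y - p) 0 := by
      rw [min_eq_left (by linarith : x - p ≤ 0)]; exact lt_min (by linarith) (by linarith)
    have hmax : c * max (x - p) 0 ≤ c * max (y - p) 0 := by gcongr
    simp only [bendAt]; linarith
  · rw [bendAt_of_ge hx, bendAt_of_ge (hx.trans hxy.le)]
    gcongr

theorem Finset.exists_strictMono_continuous_natCast_lt_card (S : Finset ℝ) :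
    ∃ φ : ℝ → ℝ, StrictMono φ ∧ Continuous φ ∧
      ∀ x ∈ S, ∃ k : ℕ, k < #S ∧ φ x = k := by
  induction S using Finset.induction_on_max with
  | empty => exact ⟨id, strictMono_id, continuous_id, by simp⟩
  | insert a T haT ih =>
    obtain ⟨φ, hφ, hφc, hφT⟩ := ih
    have haT' : a ∉ T := fun h => lt_irrefl a (haT a h)
    rw [card_insert_of_notMem haT']
    rcases T.eq_empty_or_nonempty with rfl | hT
    · exact ⟨(· - a), fun x y h => by simpa using h, by fun_prop, by simp⟩
    -- bend the line at the image of `max T` so that `a` lands right after it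
    set t := T.max' hT
    obtain ⟨k, hk, hkt⟩ := hφT t (T.max'_mem hT)
    have hgap : 0 < φ a - φ t := sub_pos.2 (hφ (haT t (T.max'_mem hT)))
    refine ⟨bendAt (φ t) (φ a - φ t)⁻¹ ∘ φ,
      (bendAt_strictMono (inv_pos.2 hgap)).comp hφ, (continuous_bendAt _ _).comp hφc, ?_⟩
    intro x hx
    rcases mem_insert.1 hx with rfl | hx
    · refine ⟨k + 1, by omega, ?_⟩
      rw [Function.comp_apply, bendAt_of_ge (sub_pos.1 hgap).le, inv_mul_cancel₀ hgap.ne', hkt]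
      push_cast; ring
    · obtain ⟨j, hj, hjx⟩ := hφT x hx
      exact ⟨j, by omega, by
        rw [Function.comp_apply, bendAt_of_le (hφ.monotone (T.le_max' x hx)), hjx]⟩

lemma Monotone.image_segment {φ : ℝ → ℝ} (hφ : Monotone φ) (hφc : Continuous φ)
    (a b : ℝ) :
    φ '' segment ℝ a b = segment ℝ (φ a) (φ b) := by
  simp only [segment_eq_uIcc]
  exact hφc.continuousOn.image_uIcc_of_monotoneOn (hφ.monotoneOn _)

lemma image_prodMap_segment {φ ψ : ℝ → ℝ} (hφ : Monotone φ) (hφc : Continuous φ)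
    (hψ : Monotone ψ) (hψc : Continuous ψ) {p q : Pt} (hpq : axisAligned p q) :
    Prod.map φ ψ '' segment ℝ p q = segment ℝ (Prod.map φ ψ p) (Prod.map φ ψ q) := by
  obtain ⟨x₁, y₁⟩ := p
  obtain ⟨x₂, y₂⟩ := q
  rcases hpq with rfl | rfl
  · rw [← Prod.image_mk_segment_right, Set.image_image, Prod.map_apply, Prod.map_apply,
      ← Prod.image_mk_segment_right, ← hψ.image_segment hψc, Set.image_image]
    rfl
  · rw [← Prod.image_mk_segment_left, Set.image_image, Prod.map_apply, Prod.map_apply,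
      ← Prod.image_mk_segment_left, ← hφ.image_segment hφc, Set.image_image]
    rfl

namespace OrthoCurve

lemma mem_toSet {c : OrthoCurve} {z : Pt} :
    z ∈ c.toSet ↔
      ∃ (i : ℕ) (_ : i + 1 < c.pts.length), z ∈ segment ℝ c.pts[i] c.pts[i + 1] := by
  simp only [toSet, Set.mem_iUnion, List.get_eq_getElem]
  constructor
  · rintro ⟨⟨i, hi⟩, hz⟩
    exact ⟨i, by omega, hz⟩
  · rintro ⟨i, hi, hz⟩
    exact ⟨⟨i, by omega⟩, hz⟩

def map (φ ψ : ℝ → ℝ) (c : OrthoCurve) : OrthoCurve where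
  pts := c.pts.map (Prod.map φ ψ)
  len2 := by simpa using c.len2
  ortho := (List.isChain_map _).2 (c.ortho.imp fun _ _ h => h.imp (congrArg φ) (congrArg ψ))

@[simp] lemma length_map_pts (φ ψ : ℝ → ℝ) (c : OrthoCurve) :
    (c.map φ ψ).pts.length = c.pts.length :=
  List.length_map _

lemma toSet_map {φ ψ : ℝ → ℝ} (hφ : Monotone φ) (hφc : Continuous φ)
    (hψ : Monotone ψ) (hψc : Continuous ψ) (c : OrthoCurve) :
    (c.map φ ψ).toSet = Prod.map φ ψ '' c.toSet := by
  ext z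
  simp only [mem_toSet, Set.mem_image, length_map_pts]
  constructor
  · rintro ⟨i, hi, hz⟩
    simp only [map, List.getElem_map] at hz
    rw [← image_prodMap_segment hφ hφc hψ hψc (List.isChain_iff_getElem.1 c.ortho i hi)] at hz
    obtain ⟨w, hw, rfl⟩ := hz
    exact ⟨w, ⟨i, hi, hw⟩, rfl⟩
  · rintro ⟨w, ⟨i, hi, hw⟩, rfl⟩
    refine ⟨i, hi, ?_⟩
    simp only [map, List.getElem_map]
    rw [← image_prodMap_segment hφ hφc hψ hψc (List.isChain_iff_getElem.1 c.ortho i hi)]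
    exact Set.mem_image_of_mem _ hw

noncomputable def coords (c : OrthoCurve) : Finset ℝ :=
  (c.pts.map Prod.fst ++ c.pts.map Prod.snd).toFinset

lemma card_coords_le (c : OrthoCurve) : #c.coords ≤ 2 * c.pts.length := by
  unfold coords
  grw [List.toFinset_card_le]
  simp only [List.length_append, List.length_map]
  omega

lemma fst_mem_coords {c : OrthoCurve} {p : Pt} (hp : p ∈ c.pts) : p.1 ∈ c.coords :=
  List.mem_toFinset.2 (List.mem_append_left _ (List.mem_map_of_mem hp))

lemma snd_mem_coords {c : OrthoCurve} {p : Pt} (hp : p ∈ c.pts) : p.2 ∈ c.coords :=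
  List.mem_toFinset.2 (List.mem_append_right _ (List.mem_map_of_mem hp))

end OrthoCurve

namespace VPGRep

variable {V : Type*} {G : SimpleGraph V} {E : Set (Sym2 V)}

lemma length_pts_le_four (R : VPGRep G E) (v : V) : (R.curve v).pts.length ≤ 4 := by
  have := R.bends_le v
  unfold OrthoCurve.bends at this
  omega

def map (R : VPGRep G E) {φ ψ : ℝ → ℝ} (hφ : StrictMono φ) (hφc : Continuous φ)
    (hψ : StrictMono ψ) (hψc : Continuous ψ) : VPGRep G E where
  curve v := (R.curve v).map φ ψ
  bends_le v := by simpa [OrthoCurve.bends] using R.bends_le v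
  one_string u v huv := by
    simp only [OrthoCurve.toSet_map hφ.monotone hφc hψ.monotone hψc,
      ← Set.image_inter (hφ.injective.prodMap hψ.injective)]
    exact (R.one_string u v huv).image _
  cross_iff u v huv := by
    simp only [OrthoCurve.toSet_map hφ.monotone hφc hψ.monotone hψc,
      ← Set.image_inter (hφ.injective.prodMap hψ.injective), Set.image_nonempty]
    exact R.cross_iff u v huv

end VPGRep

/-- There is a universal constant `c` such that every `n`-vertex
graph with a 1-string B₂-VPG representation has one in which all corner points
(endpoints and bends) of all curves are integer points of a grid of size
`c·n × c·n`, and the total number of segments over all curves is at most `3n`. -/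
theorem stmt9 :
    ∃ c : ℕ, 0 < c ∧
      ∀ (V : Type) [Fintype V] (G : SimpleGraph V), HasB2VPG G →
        ∃ R : VPGRep G G.edgeSet,
          (∀ v, ∀ p ∈ (R.curve v).pts,
            (∃ a : ℤ, p.1 = a ∧ 0 ≤ a ∧ a ≤ (c * Fintype.card V : ℕ)) ∧
            (∃ b : ℤ, p.2 = b ∧ 0 ≤ b ∧ b ≤ (c * Fintype.card V : ℕ))) ∧
          (∑ v, ((R.curve v).pts.length - 1)) ≤ 3 * Fintype.card V := by
  refine ⟨8, by norm_num, fun V _ G ⟨R⟩ => ?_⟩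
  set S := univ.biUnion fun v => (R.curve v).coords
  have hS : #S ≤ 8 * Fintype.card V := by
    grw [card_biUnion_le, sum_le_card_nsmul _ _ 8 fun v _ => by
      have := (R.curve v).card_coords_le; have := R.length_pts_le_four v; omega]
    simp [mul_comm]
  obtain ⟨φ, hφ, hφc, hφS⟩ := S.exists_strictMono_continuous_natCast_lt_card
  have hgrid :
      ∀ x ∈ S, ∃ a : ℤ, φ x = a ∧ 0 ≤ a ∧ a ≤ (8 * Fintype.card V : ℕ) := by
    intro x hx
    obtain ⟨k, hk, hkx⟩ := hφS x hx
    exact ⟨k, by simp [hkx], by positivity, by omega⟩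
  refine ⟨R.map hφ hφc hφ hφc, fun v p hp => ?_, ?_⟩
  · obtain ⟨q, hq, rfl⟩ := List.mem_map.1 hp
    exact ⟨hgrid _ (mem_biUnion.2 ⟨v, mem_univ _, OrthoCurve.fst_mem_coords hq⟩),
      hgrid _ (mem_biUnion.2 ⟨v, mem_univ _, OrthoCurve.snd_mem_coords hq⟩)⟩
  · grw [sum_le_card_nsmul _ _ 3 fun v _ => by
      have := R.length_pts_le_four v; simp only [VPGRep.map, OrthoCurve.length_map_pts]; omega]
    simp [mul_comm]
end
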